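/- Let π = (π_1, …, π_k) be a permutation of {1, …, k}. Then: (i) if S(π) = 0 and π_1 is even, then S'(π) = −1; (ii) if S(π) = 0 and π_1 is odd, then S'(π⁺) = 0; (iii) if S(π) = 1 and π_1 is even, then S'(π) = 0; (iv) if S(π) = 1 and π_1 is odd, then S'(π⁺) = −1. -/

import Mathlib

/-- Parity sign: `1` for even integers, `-1` for odd integers. -/
def pSign (x : ℤ) : ℤ := if Even x then 1 else -1

/-- Local cost `C_{xy} = δ_{xy} − ((p_x p_y + 1)/2)·sgn(x−y)·p_x`. -/
def locCost (x y : ℤ) : ℤ :=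
  (if x = y then 1 else 0) - ((pSign x * pSign y + 1) / 2) * (x - y).sign * pSign x

/-- Sum of local costs over consecutive pairs of the sequence. -/
def pairCostSum (l : List ℤ) : ℤ := ((l.zip l.tail).map fun q => locCost q.1 q.2).sum

/-- Score `S(σ) = (1 + p_{σ₁})/2 + Σ_{i=1}^{k-1} C_{σ_i σ_{i+1}}`. -/
def score (l : List ℤ) : ℤ := (1 + pSign (l.headD 0)) / 2 + pairCostSum l

/-- Circular score `S^c(σ) = Σ_{i=1}^{k} C_{σ_i, σ_{(i mod k)+1}}` (indices cyclic). -/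
def cscore (l : List ℤ) : ℤ := ((l.zip (l.rotate 1)).map fun q => locCost q.1 q.2).sum

/-- Shifted score `S'(σ) = (1 − p_{σ₁})/2 + Σ_{i=1}^{k−1} C_{σ_i σ_{i+1}}`
(the score of placing `σ` shifted one run to the right in the zigzag word). -/
def scoreShift (l : List ℤ) : ℤ := (1 - pSign (l.headD 0)) / 2 + pairCostSum l

/-!
Shifting every entry by one flips every parity, so it negates each `p_x` while keeping each
product `p_x p_y`; hence it negates `C_{xy}` whenever `x ≠ y`, and so negates the pair-cost sum
of a sequence without repeated neighbours. The score and the shifted score differ only in the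
head term: for an even head `S' = S - 1`, and for an odd head `S'(σ⁺) = -S(σ)`.
-/

lemma pSign_of_even {x : ℤ} (h : Even x) : pSign x = 1 := if_pos h

lemma pSign_of_odd {x : ℤ} (h : Odd x) : pSign x = -1 := if_neg (Int.not_even_iff_odd.2 h)

lemma pSign_add_one (x : ℤ) : pSign (x + 1) = -pSign x := by
  rcases Int.even_or_odd x with h | h
  · rw [pSign_of_even h, pSign_of_odd h.add_one]
  · rw [pSign_of_odd h, pSign_of_even h.add_one, neg_neg]

lemma locCost_add_one_add_one {x y : ℤ} (h : x ≠ y) :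
    locCost (x + 1) (y + 1) = -locCost x y := by
  have h' : x + 1 ≠ y + 1 := by omega
  have hsub : x + 1 - (y + 1) = x - y := by ring
  rw [locCost, locCost, if_neg h, if_neg h', hsub, pSign_add_one, pSign_add_one, neg_mul_neg]
  ring

lemma pairCostSum_cons_cons (a b : ℤ) (l : List ℤ) :
    pairCostSum (a :: b :: l) = locCost a b + pairCostSum (b :: l) := by
  simp [pairCostSum]

lemma pairCostSum_map_add_one :
    ∀ {l : List ℤ}, l.IsChain (· ≠ ·) → pairCostSum (l.map (· + 1)) = -pairCostSum l
  | [], _ | [_], _ => rfl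
  | a :: b :: l, h => by
    rw [List.isChain_cons_cons] at h
    have ih := pairCostSum_map_add_one h.2
    rw [List.map_cons] at ih
    rw [List.map_cons, List.map_cons, pairCostSum_cons_cons, ih, locCost_add_one_add_one h.1,
      pairCostSum_cons_cons, neg_add]

lemma scoreShift_eq_score_sub_one {l : List ℤ} (h : Even (l.headD 0)) :
    scoreShift l = score l - 1 := by
  rw [scoreShift, score, pSign_of_even h]
  ring

lemma scoreShift_map_add_one {l : List ℤ} (hl : l.IsChain (· ≠ ·)) (h : Odd (l.headD 0)) :
    scoreShift (l.map (· + 1)) = -score l := by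
  cases l with
  | nil => exact absurd h (by decide)
  | cons a l =>
    rw [List.headD_cons] at h
    rw [scoreShift, score, pairCostSum_map_add_one hl, List.map_cons, List.headD_cons,
      List.headD_cons, pSign_add_one, pSign_of_odd h]
    ring

/-- Conditional relations for the shifted score of a permutation `π` of `{1, …, k}`:
(i) `S(π) = 0`, `π₁` even ⟹ `S'(π) = −1`; (ii) `S(π) = 0`, `π₁` odd ⟹ `S'(π⁺) = 0`;
(iii) `S(π) = 1`, `π₁` even ⟹ `S'(π) = 0`; (iv) `S(π) = 1`, `π₁` odd ⟹ `S'(π⁺) = −1`. -/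
theorem scoreShift_cases (k : ℕ) (l : List ℤ)
    (hl : l.Perm ((List.range k).map fun i => (i : ℤ) + 1)) :
    (score l = 0 → Even (l.headD 0) → scoreShift l = -1) ∧
    (score l = 0 → Odd (l.headD 0) → scoreShift (l.map (· + 1)) = 0) ∧
    (score l = 1 → Even (l.headD 0) → scoreShift l = 0) ∧
    (score l = 1 → Odd (l.headD 0) → scoreShift (l.map (· + 1)) = -1) := by
  -- `List.range k` is coerced to `List ℤ` through the list monad, hence the `flatMap`.
  have hnodup : l.Nodup := by
    refine hl.nodup_iff.2 (List.Nodup.map (fun _ _ h => by omega) ?_)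
    simp only [List.bind_eq_flatMap, List.pure_def, ← List.map_eq_flatMap]
    exact List.nodup_range.map Nat.cast_injective
  have hchain : l.IsChain (· ≠ ·) := hnodup.isChain
  refine ⟨fun hs hp => ?_, fun hs hp => ?_, fun hs hp => ?_, fun hs hp => ?_⟩
  · simp [scoreShift_eq_score_sub_one hp, hs]
  · simp [scoreShift_map_add_one hchain hp, hs]
  · simp [scoreShift_eq_score_sub_one hp, hs]
  · simp [scoreShift_map_add_one hchain hp, hs]
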